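/- Let S be a 3-graph whose vertex set is partitioned into V_1, V_2, V_3 with edges exactly all triples of the form {u_1, v_1, x} with u_1 ≠ v_1 ∈ V_1 and x ∈ V_2 ∪ V_3, and {v_1, v_2, v_3} with v_i ∈ V_i. If S contains a copy of the ring R_t, then t is even. -/
import Mathlib


/-- The edge set of the ring 3-graph `R_t`. -/
def ringEdges (t : ℕ) : Set (Finset (ZMod t × Bool)) :=
  {e | ∃ (i : ZMod t) (b : Bool), e = {(i, false), (i, true), (i + 1, b)}}

/-- The edge set of the construction `S`: the vertex set is partitioned into three
parts by `P : V → Fin 3`, and the edges are exactly the triples with two vertices in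
`V_1` (part `0`) and one in `V_2 ∪ V_3`, together with the triples with one vertex
in each part. -/
def skewEdges {V : Type*} [DecidableEq V] (P : V → Fin 3) : Set (Finset V) :=
  {e | e.card = 3 ∧
    (((e.filter (fun v => P v = 0)).card = 2 ∧ (e.filter (fun v => P v ≠ 0)).card = 1) ∨
     (∀ i : Fin 3, (e.filter (fun v => P v = i)).card = 1))}

lemma card_filter_triple {V : Type*} [DecidableEq V] (p : V → Prop) [DecidablePred p]
    {u v w : V} (huv : u ≠ v) (huw : u ≠ w) (hvw : v ≠ w) :
    (({u, v, w} : Finset V).filter p).card =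
      (if p u then 1 else 0) + (if p v then 1 else 0) + (if p w then 1 else 0) := by
  rw [Finset.card_filter]
  rw [show ({u, v, w} : Finset V) = insert u (insert v {w}) from rfl]
  rw [Finset.sum_insert (by simp [huv, huw]), Finset.sum_insert (by simp [hvw]),
    Finset.sum_singleton]
  ring

/-- Abstract color condition for an edge with colors `a b z`. -/
def Ok (a b z : Fin 3) : Prop :=
  ((if a = 0 then 1 else 0) + (if b = 0 then 1 else 0) + (if z = 0 then 1 else 0) = 2 ∧
   (if a ≠ 0 then 1 else 0) + (if b ≠ 0 then 1 else 0) + (if z ≠ 0 then 1 else 0) = 1) ∨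
  (∀ x : Fin 3, (if a = x then 1 else 0) + (if b = x then 1 else 0) + (if z = x then 1 else 0) = 1)

instance (a b z : Fin 3) : Decidable (Ok a b z) := by unfold Ok; infer_instance

lemma okStep : ∀ a b zf zt w : Fin 3, Ok a b zf → Ok a b zt → Ok zf zt w →
    (a.val + b.val ≤ 3 ∧
     ((a.val + b.val = 0 ∨ a.val + b.val = 3) → zf.val + zt.val = 3 - (a.val + b.val)) ∧
     ((a.val + b.val = 1 ∨ a.val + b.val = 2) →
        (zf.val + zt.val = 3 - (a.val + b.val) ∨ zf.val + zt.val = 0))) := by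
  decide

/-- If the construction `S` contains a copy of the ring `R_t` (`t ≥ 2`), then `t`
is even. -/
theorem skew_ring_even {V : Type*} [DecidableEq V] (P : V → Fin 3) (t : ℕ) (ht : 2 ≤ t)
    (f : ZMod t × Bool → V) (hf : Function.Injective f)
    (hedge : ∀ e ∈ ringEdges t, Finset.image f e ∈ skewEdges P) :
    Even t := by
  haveI : Fact (1 < t) := ⟨ht⟩
  haveI : NeZero t := ⟨by omega⟩
  have hne1 : ∀ i : ZMod t, i ≠ i + 1 := by
    intro i h
    exact one_ne_zero (left_eq_add.mp h)
  have hOk : ∀ (i : ZMod t) (b' : Bool),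
      Ok (P (f (i, false))) (P (f (i, true))) (P (f (i + 1, b'))) := by
    intro i b'
    have hmem : ({(i, false), (i, true), (i + 1, b')} : Finset (ZMod t × Bool)) ∈
        ringEdges t := ⟨i, b', rfl⟩
    have h := hedge _ hmem
    rw [Finset.image_insert, Finset.image_insert, Finset.image_singleton] at h
    have h1 : f (i, false) ≠ f (i, true) := fun h =>
      Bool.false_ne_true (congrArg Prod.snd (hf h))
    have h2 : f (i, false) ≠ f (i + 1, b') := fun h =>
      hne1 i (congrArg Prod.fst (hf h))
    have h3 : f (i, true) ≠ f (i + 1, b') := fun h =>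
      hne1 i (congrArg Prod.fst (hf h))
    obtain ⟨-, hc⟩ := h
    rcases hc with ⟨hA, hB⟩ | hC
    · left
      rw [card_filter_triple _ h1 h2 h3] at hA
      rw [card_filter_triple _ h1 h2 h3] at hB
      exact ⟨hA, hB⟩
    · right
      intro x
      have hx := hC x
      rwa [card_filter_triple _ h1 h2 h3] at hx
  set N : ZMod t → ℕ :=
    fun i => (P (f (i, false))).val + (P (f (i, true))).val with hN
  have hstep := fun i : ZMod t =>
    okStep _ _ _ _ _ (hOk i false) (hOk i true) (hOk (i + 1) false)
  have hle : ∀ i, N i ≤ 3 := fun i => (hstep i).1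
  have hstep03 : ∀ i, (N i = 0 ∨ N i = 3) → N (i + 1) = 3 - N i :=
    fun i => (hstep i).2.1
  have hstep12 : ∀ i, (N i = 1 ∨ N i = 2) → (N (i + 1) = 3 - N i ∨ N (i + 1) = 0) :=
    fun i => (hstep i).2.2
  have huniv : ∀ i, N (i + 1) = 3 - N i := by
    by_cases hex : ∃ i0, N i0 = 0 ∨ N i0 = 3
    · obtain ⟨i0, h0⟩ := hex
      have hall : ∀ k : ℕ, N (i0 + (k : ZMod t)) = 0 ∨ N (i0 + (k : ZMod t)) = 3 := by
        intro k
        induction k with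
        | zero => simpa using h0
        | succ k ih =>
          have h' := hstep03 _ ih
          rw [show (i0 + ((k + 1 : ℕ) : ZMod t)) = (i0 + (k : ZMod t)) + 1 by
            push_cast; ring]
          omega
      have hall' : ∀ i, N i = 0 ∨ N i = 3 := by
        intro i
        have := hall ((i - i0).val)
        rwa [ZMod.natCast_val, ZMod.cast_id, add_sub_cancel] at this
      exact fun i => hstep03 i (hall' i)
    · push_neg at hex
      intro i
      have h12 : N i = 1 ∨ N i = 2 := by
        have := hle i
        have := hex i
        omega
      rcases hstep12 i h12 with h | h
      · exact h
      · exact absurd h (hex (i + 1)).1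
  have key : ∀ k : ℕ, N ((k : ZMod t)) = if Even k then N 0 else 3 - N 0 := by
    intro k
    induction k with
    | zero => simp
    | succ k ih =>
      have h := huniv ((k : ZMod t))
      rw [show ((k + 1 : ℕ) : ZMod t) = (k : ZMod t) + 1 by push_cast; ring, h, ih]
      rcases Nat.even_or_odd k with he | ho
      · have h1 : ¬ Even (k + 1) := by simp [Nat.even_add_one, he]
        simp [he, h1]
      · have h1 : ¬ Even k := Nat.not_even_iff_odd.mpr ho
        have h2 : Even (k + 1) := Nat.even_add_one.mpr h1
        have := hle 0
        simp only [h1, h2, if_true, if_false, if_neg h1, if_pos h2]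
        omega
  rcases Nat.even_or_odd t with he | ho
  · exact he
  · exfalso
    have hk := key t
    rw [ZMod.natCast_self] at hk
    rw [if_neg (Nat.not_even_iff_odd.mpr ho)] at hk
    have := hle 0
    omega
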